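/- Suppose (BR) holds. Then ∑_{j=1}^{ℓ} d_j(1 − c_j) is even; equivalently ∑_{j=1}^{ℓ} d_j ≡ ∑_{j=1}^{ℓ} c_j d_j (mod 2). -/

import Mathlib

open LaurentPolynomial Finset

/-- `r a = X^{2a} + X^{-2a}` in `ℤ[X, X⁻¹]`, where `X` plays the role of `ζ^{1/2}`. -/
noncomputable def rLaurent (a : ℤ) : LaurentPolynomial ℤ := T (2 * a) + T (-(2 * a))

/-- `σ₁(d) = ∑_j r(d_j)`. -/
noncomputable def sigma1 {ℓ : ℕ} (d : Fin ℓ → ℤ) : LaurentPolynomial ℤ :=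
  ∑ j, rLaurent (d j)

/-- `σ₂(d) = ∑_{i < j} r(d_i) r(d_j)`. -/
noncomputable def sigma2 {ℓ : ℕ} (d : Fin ℓ → ℤ) : LaurentPolynomial ℤ :=
  ∑ i, ∑ j ∈ univ.filter (fun j => i < j), rLaurent (d i) * rLaurent (d j)

/-!
Substituting `X ↦ -X` fixes every even Laurent polynomial, in particular `σ₁(d)`, `σ₂(d)` and
the integer constants, and multiplies `∏_j (X^{a_j} - X^{-a_j})` by `(-1)^{∑_j a_j}`. Applied to
(BR), it multiplies the left side by `(-1)^{∑ c_j d_j}` and the right side by `(-1)^{∑ d_j}`;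
since both sides are equal and nonzero, the two signs agree.
-/

theorem Int.units_eq_of_smul_eq_smul {M : Type*} [AddCommGroup M] [Module.IsTorsionFree ℤ M]
    {u v : ℤˣ} {x : M} (hx : x ≠ 0) (h : u • x = v • x) : u = v :=
  Units.ext (smul_left_injective ℤ hx h)

theorem Int.negOnePow_sum {ι : Type*} (s : Finset ι) (f : ι → ℤ) :
    (∑ i ∈ s, f i).negOnePow = ∏ i ∈ s, (f i).negOnePow := by
  classical
  induction s using Finset.induction_on with
  | empty => rfl
  | insert i s hi ih => rw [sum_insert hi, prod_insert hi, Int.negOnePow_add, ih]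

namespace LaurentPolynomial

theorem T_sub_T_neg_ne_zero {R : Type*} [Ring R] [Nontrivial R] {a : ℤ} (ha : a ≠ 0) :
    (T a - T (-a) : R[T;T⁻¹]) ≠ 0 :=
  sub_ne_zero.mpr fun h => by
    have := congrArg degree h
    rw [degree_T, degree_T, WithBot.coe_inj] at this
    omega

section CommRing

variable {R : Type*} [CommRing R]

noncomputable def negT : R[T;T⁻¹] →+* R[T;T⁻¹] := eval₂ C (-unitOfInvertible (T 1 : R[T;T⁻¹]))

theorem negT_T (n : ℤ) : negT (T n : R[T;T⁻¹]) = n.negOnePow • T n := by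
  induction n using Int.induction_on with
  | zero => simp [T_zero]
  | succ n ih =>
    rw [T_add, map_mul, ih, Int.negOnePow_succ, negT, eval₂_T, zpow_one, Units.val_neg,
      val_unitOfInvertible, Units.neg_smul, smul_mul_assoc, mul_neg, smul_neg]
  | pred n ih =>
    rw [T_sub, map_mul, ih, Int.negOnePow_sub, negT, eval₂_T, zpow_neg, zpow_one, inv_neg,
      Units.val_neg, val_inv_unitOfInvertible, invOf_T, Int.negOnePow_one, mul_neg_one,
      Units.neg_smul, smul_mul_assoc, mul_neg, smul_neg]

theorem negT_T_two_mul (a : ℤ) : negT (T (2 * a) : R[T;T⁻¹]) = T (2 * a) := by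
  rw [negT_T, Int.negOnePow_two_mul, one_smul]

theorem negT_prod_T_sub_T_neg {ι : Type*} (s : Finset ι) (a : ι → ℤ) :
    negT (∏ i ∈ s, (T (a i) - T (-a i)) : R[T;T⁻¹]) =
      (∑ i ∈ s, a i).negOnePow • ∏ i ∈ s, (T (a i) - T (-a i)) := by
  rw [map_prod, Int.negOnePow_sum, ← prod_smul]
  refine prod_congr rfl fun i _ => ?_
  rw [map_sub, negT_T, negT_T, Int.negOnePow_neg, smul_sub]

end CommRing

end LaurentPolynomial

theorem negT_rLaurent (a : ℤ) : negT (rLaurent a) = rLaurent a := by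
  rw [rLaurent, map_add, negT_T_two_mul, ← mul_neg, negT_T_two_mul]

theorem negT_sigma1 {ℓ : ℕ} (d : Fin ℓ → ℤ) : negT (sigma1 d) = sigma1 d := by
  simp only [sigma1, map_sum, negT_rLaurent]

theorem negT_sigma2 {ℓ : ℕ} (d : Fin ℓ → ℤ) : negT (sigma2 d) = sigma2 d := by
  simp only [sigma2, map_sum, map_mul, negT_rLaurent]

theorem stmt_3_general (ℓ : ℕ) (k : ℕ)
    (m : ℕ) (hm : 1 ≤ m) (c d : Fin ℓ → ℕ)
    (hc : ∀ j, 1 ≤ c j) (hd : ∀ j, 1 ≤ d j)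
    (hBR : (m : LaurentPolynomial ℤ) *
        ∏ j, (T ((c j : ℤ) * (d j : ℤ)) - T (-((c j : ℤ) * (d j : ℤ)))) =
      (sigma2 (fun j => (d j : ℤ)) +
          ((2 * (k : ℤ) - 1 : ℤ) : LaurentPolynomial ℤ) * sigma1 (fun j => (d j : ℤ)) +
          ((2 * (k : ℤ) ^ 2 - 3 * (k : ℤ) + (ℓ : ℤ) : ℤ) : LaurentPolynomial ℤ)) *
        ∏ j, (T ((d j : ℤ)) - T (-(d j : ℤ)))) :
    Even (∑ j, (d j : ℤ) * (1 - (c j : ℤ))) ∧ (∑ j, d j) % 2 = (∑ j, c j * d j) % 2 := by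
  have hsign := congrArg negT hBR
  simp only [map_mul, map_add, map_natCast, map_intCast, negT_sigma1, negT_sigma2,
    negT_prod_T_sub_T_neg, mul_smul_comm] at hsign
  rw [← hBR] at hsign
  have hne : (m : ℤ[T;T⁻¹]) * ∏ j, (T ((c j : ℤ) * d j) - T (-((c j : ℤ) * d j))) ≠ 0 := by
    rw [← Int.cast_natCast, ← zsmul_eq_mul]
    refine smul_ne_zero (by omega) (prod_ne_zero_iff.mpr fun j _ => T_sub_T_neg_ne_zero ?_)
    exact (mul_pos (by exact_mod_cast hc j) (by exact_mod_cast hd j)).ne'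
  have heven : Even (∑ j, (d j : ℤ) - ∑ j, (c j : ℤ) * d j) :=
    (Int.negOnePow_eq_iff _ _).mp (Int.units_eq_of_smul_eq_smul hne hsign).symm
  refine ⟨by simpa [mul_sub, sum_sub_distrib, mul_comm] using heven, ?_⟩
  refine Nat.modEq_iff_dvd.mpr ?_
  push_cast
  rwa [dvd_sub_comm, ← even_iff_two_dvd]

theorem stmt_3 (ℓ : ℕ) (hℓ : 1 ≤ ℓ) (hℓ24 : ℓ ≤ 24) (k : ℕ) (hk : k = 24 - ℓ)
    (m : ℕ) (hm : 1 ≤ m) (c d : Fin ℓ → ℕ)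
    (hc : ∀ j, 1 ≤ c j) (hd : ∀ j, 1 ≤ d j)
    (hBR : (m : LaurentPolynomial ℤ) *
        ∏ j, (T ((c j : ℤ) * (d j : ℤ)) - T (-((c j : ℤ) * (d j : ℤ)))) =
      (sigma2 (fun j => (d j : ℤ)) +
          ((2 * (k : ℤ) - 1 : ℤ) : LaurentPolynomial ℤ) * sigma1 (fun j => (d j : ℤ)) +
          ((2 * (k : ℤ) ^ 2 - 3 * (k : ℤ) + (ℓ : ℤ) : ℤ) : LaurentPolynomial ℤ)) *
        ∏ j, (T ((d j : ℤ)) - T (-(d j : ℤ)))) :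
    Even (∑ j, (d j : ℤ) * (1 - (c j : ℤ))) ∧ (∑ j, d j) % 2 = (∑ j, c j * d j) % 2 :=
  stmt_3_general ℓ k m hm c d hc hd hBR
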